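/- If R is a commutative ring, then every cyclic R-module is a co-Kasch module. -/
import Mathlib


def IsCoKasch (R : Type*) [Ring R] (M : Type*) [AddCommGroup M] [Module R M] : Prop :=
  ∀ (K : Submodule R M) (S : Submodule R (M ⧸ K)), IsSimpleModule R S →
    ∃ f : M →ₗ[R] S, Function.Surjective f

/-- Over a commutative ring, every cyclic module is co-Kasch. -/
theorem stmt15 (R : Type u) [CommRing R] (M : Type u) [AddCommGroup M] [Module R M]
    (hcyc : ∃ m : M, Submodule.span R {m} = ⊤) : IsCoKasch R M := by
  intro K S hS
  obtain ⟨m, hm⟩ := hcyc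
  haveI := hS; haveI : Nontrivial S := IsSimpleModule.nontrivial R S
  obtain ⟨s, hs⟩ := exists_ne (0 : S)
  -- span of s in S is ⊤ since S is simple
  have hspan : Submodule.span R {s} = ⊤ := by
    rcases eq_bot_or_eq_top (Submodule.span R {s}) with h | h
    · exact absurd (by have : s ∈ Submodule.span R {s} := Submodule.mem_span_singleton_self s; rw [h] at this; simpa using this) hs
    · exact h
  set φ : R →ₗ[R] M := LinearMap.toSpanSingleton R M m
  have hφ : Function.Surjective φ := by
    rw [← LinearMap.range_eq_top, ← LinearMap.span_singleton_eq_range, hm]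
  set g : R →ₗ[R] S := LinearMap.toSpanSingleton R S s
  have hg : Function.Surjective g := by
    rw [← LinearMap.range_eq_top, ← LinearMap.span_singleton_eq_range, hspan]
  have hle : LinearMap.ker φ ≤ LinearMap.ker g := by
    intro r hr
    have hrm : r • m = 0 := hr
    have hM : ∀ x : M, r • x = 0 := by
      intro x
      have hx : x ∈ Submodule.span R {m} := hm ▸ Submodule.mem_top
      obtain ⟨a, rfl⟩ := Submodule.mem_span_singleton.mp hx
      rw [smul_comm, hrm, smul_zero]
    have : r • ((s : M ⧸ K)) = 0 := by
      obtain ⟨x, hx⟩ := Submodule.Quotient.mk_surjective K (s : M ⧸ K)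
      rw [← hx, ← Submodule.Quotient.mk_smul, hM, Submodule.Quotient.mk_zero]
    have : r • s = 0 := by
      ext
      simpa using this
    simpa [LinearMap.mem_ker, g, LinearMap.toSpanSingleton_apply]
  let e : (R ⧸ LinearMap.ker φ) ≃ₗ[R] M := φ.quotKerEquivOfSurjective hφ
  let lift : (R ⧸ LinearMap.ker φ) →ₗ[R] S := (LinearMap.ker φ).liftQ g hle
  refine ⟨lift ∘ₗ (e.symm : M →ₗ[R] (R ⧸ LinearMap.ker φ)), ?_⟩
  have hlift : Function.Surjective lift := by
    intro x
    obtain ⟨r, hr⟩ := hg x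
    exact ⟨Submodule.Quotient.mk r, hr⟩
  exact hlift.comp e.symm.surjective
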